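/- Let N ≥ 1 and let u₀ ∈ L¹(ℝ^N) have finite first absolute moment 𝒩₁ = ∫_{ℝ^N} |y| |u₀(y)| dy < ∞. Let M = ∫_{ℝ^N} u₀(x) dx and u(x,t) = ∫_{ℝ^N} G_t(x−y) u₀(y) dy. Then there is a constant C > 0 depending only on N such that for all t > 0 and all x ∈ ℝ^N, |u(x,t) − M·G_t(x)| ≤ C·𝒩₁·t^{−(N+1)/2}. -/

import Mathlib

open MeasureTheory Real Filter

/-- The Gaussian heat kernel on `ℝ^N`: `G_t(x) = (4πt)^{-N/2} exp(-|x|²/(4t))`. -/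
noncomputable def heatKernel (N : ℕ) (t : ℝ) (x : EuclideanSpace ℝ (Fin N)) : ℝ :=
  (4 * π * t) ^ (-(N : ℝ) / 2) * exp (-‖x‖ ^ 2 / (4 * t))

/-- The solution of the heat equation with initial data `u₀`, given by convolution
with the heat kernel: `u(x,t) = ∫ G_t(x-y) u₀(y) dy`. -/
noncomputable def heatSol (N : ℕ) (u₀ : EuclideanSpace ℝ (Fin N) → ℝ)
    (x : EuclideanSpace ℝ (Fin N)) (t : ℝ) : ℝ :=
  ∫ y, heatKernel N t (x - y) * u₀ y

/-!
Since `M = ∫ u₀`, we have `u(x,t) - M G_t(x) = ∫ (G_t(x - y) - G_t(x)) u₀(y) dy`.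
The Gaussian profile `r ↦ exp(-r²/(4t))` is `t^{-1/2}`-Lipschitz, because with `s = |r|/(2√t)`
its derivative has size `s exp(-s²)/√t` and `s ≤ 1 + s² ≤ exp(s²)`. Hence
`|G_t(x - y) - G_t(x)| ≤ (4π)^{-N/2} t^{-(N+1)/2} |y|`, and integrating against `|u₀|` gives the
bound with `C = (4π)^{-N/2}`.
-/

section GaussianProfile

variable {t : ℝ}

lemma abs_div_mul_exp_neg_sq_div_le (ht : 0 < t) (r : ℝ) :
    |r / (2 * t)| * exp (-r ^ 2 / (4 * t)) ≤ (√t)⁻¹ := by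
  have hsqrt : 0 < √t := sqrt_pos.mpr ht
  set s := |r| / (2 * √t) with hs_def
  have hs_sq : s ^ 2 = r ^ 2 / (4 * t) := by
    rw [hs_def, div_pow, sq_abs, mul_pow, sq_sqrt ht.le]; ring
  have hs_le : s ≤ exp (s ^ 2) :=
    calc s ≤ s ^ 2 + 1 := by nlinarith [sq_nonneg (s - 1)]
      _ ≤ exp (s ^ 2) := add_one_le_exp _
  have hlhs : |r / (2 * t)| * exp (-r ^ 2 / (4 * t)) = s * exp (-s ^ 2) / √t := by
    rw [hs_sq, abs_div, abs_of_pos (by positivity : (0 : ℝ) < 2 * t), hs_def, neg_div]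
    field_simp
    rw [sq_sqrt ht.le]
  rw [hlhs, div_eq_mul_inv, exp_neg]
  apply mul_le_of_le_one_left (by positivity)
  rw [← div_eq_mul_inv, div_le_one (exp_pos _)]
  exact hs_le

lemma abs_exp_neg_sq_div_sub_le (ht : 0 < t) (a b : ℝ) :
    |exp (-a ^ 2 / (4 * t)) - exp (-b ^ 2 / (4 * t))| ≤ (√t)⁻¹ * |a - b| := by
  have hderiv : ∀ r : ℝ, HasDerivAt (fun r => exp (-r ^ 2 / (4 * t)))
      (exp (-r ^ 2 / (4 * t)) * (-(↑2 * r ^ 1) / (4 * t))) r :=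
    fun r => ((hasDerivAt_pow 2 r).neg.div_const (4 * t)).exp
  have hlip : LipschitzWith (√t)⁻¹.toNNReal (fun r => exp (-r ^ 2 / (4 * t))) := by
    refine lipschitzWith_of_nnnorm_deriv_le (fun r => (hderiv r).differentiableAt) fun r => ?_
    rw [← NNReal.coe_le_coe, coe_nnnorm, Real.coe_toNNReal _ (by positivity), (hderiv r).deriv,
      norm_mul, mul_comm, Real.norm_of_nonneg (exp_pos _).le]
    convert abs_div_mul_exp_neg_sq_div_le ht r using 2
    rw [Real.norm_eq_abs, abs_div, abs_div, abs_neg, abs_mul, pow_one, abs_two,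
      abs_of_pos (by positivity : (0 : ℝ) < 4 * t), abs_of_pos (by positivity : (0 : ℝ) < 2 * t)]
    ring
  simpa only [Real.dist_eq, Real.coe_toNNReal _ (by positivity : (0 : ℝ) ≤ (√t)⁻¹)] using
    hlip.dist_le_mul a b

end GaussianProfile

section HeatKernel

variable {N : ℕ} {t : ℝ}

lemma continuous_heatKernel (N : ℕ) (t : ℝ) : Continuous (heatKernel N t) := by
  unfold heatKernel
  fun_prop

lemma abs_heatKernel_le (ht : 0 < t) (x : EuclideanSpace ℝ (Fin N)) :
    |heatKernel N t x| ≤ (4 * π * t) ^ (-(N : ℝ) / 2) := by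
  have hexp : exp (-‖x‖ ^ 2 / (4 * t)) ≤ 1 := exp_le_one_iff.mpr
    (div_nonpos_of_nonpos_of_nonneg (neg_nonpos.mpr (by positivity)) (by positivity))
  rw [heatKernel, abs_of_nonneg (by positivity)]
  exact mul_le_of_le_one_right (by positivity) hexp

lemma abs_heatKernel_sub_heatKernel_le (ht : 0 < t) (x x' : EuclideanSpace ℝ (Fin N)) :
    |heatKernel N t x - heatKernel N t x'| ≤
      (4 * π) ^ (-(N : ℝ) / 2) * t ^ (-((N : ℝ) + 1) / 2) * ‖x - x'‖ := by
  have hrate : (4 * π * t) ^ (-(N : ℝ) / 2) * (√t)⁻¹ =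
      (4 * π) ^ (-(N : ℝ) / 2) * t ^ (-((N : ℝ) + 1) / 2) := by
    rw [mul_rpow (by positivity) ht.le, sqrt_eq_rpow, ← rpow_neg ht.le, mul_assoc,
      ← rpow_add ht]
    ring_nf
  have hnorm : |‖x‖ - ‖x'‖| ≤ ‖x - x'‖ := abs_norm_sub_norm_le x x'
  rw [← hrate, heatKernel, heatKernel, ← mul_sub, abs_mul, abs_of_nonneg (by positivity),
    mul_assoc ((4 * π * t) ^ _)]
  refine mul_le_mul_of_nonneg_left ?_ (by positivity)
  exact (abs_exp_neg_sq_div_sub_le ht _ _).trans (by gcongr)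

end HeatKernel

section HeatSol

variable {N : ℕ} {t : ℝ} {u₀ : EuclideanSpace ℝ (Fin N) → ℝ}

lemma integrable_heatKernel_sub_mul (hu : Integrable u₀) (ht : 0 < t)
    (x : EuclideanSpace ℝ (Fin N)) : Integrable fun y => heatKernel N t (x - y) * u₀ y :=
  hu.bdd_mul ((continuous_heatKernel N t).comp (continuous_sub_left x)).aestronglyMeasurable
    (Eventually.of_forall fun _ => (Real.norm_eq_abs _).trans_le (abs_heatKernel_le ht _))

lemma heatSol_sub_integral_mul_heatKernel (hu : Integrable u₀) (ht : 0 < t)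
    (x : EuclideanSpace ℝ (Fin N)) :
    heatSol N u₀ x t - (∫ y, u₀ y) * heatKernel N t x =
      ∫ y, (heatKernel N t (x - y) - heatKernel N t x) * u₀ y := by
  simp only [heatSol, sub_mul]
  rw [integral_sub (integrable_heatKernel_sub_mul hu ht x) (hu.const_mul _), integral_const_mul,
    mul_comm]

end HeatSol

theorem heat_convergence_rate_first_moment_sup_general (N : ℕ) :
    ∃ C : ℝ, 0 < C ∧ ∀ u₀ : EuclideanSpace ℝ (Fin N) → ℝ,
      Integrable u₀ →
      Integrable (fun y => ‖y‖ * |u₀ y|) →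
      ∀ t : ℝ, 0 < t → ∀ x : EuclideanSpace ℝ (Fin N),
        |heatSol N u₀ x t - (∫ y, u₀ y) * heatKernel N t x| ≤
          C * (∫ y, ‖y‖ * |u₀ y|) * t ^ (-((N : ℝ) + 1) / 2) := by
  refine ⟨(4 * π) ^ (-(N : ℝ) / 2), by positivity, fun u₀ hu hmom t ht x => ?_⟩
  set K := (4 * π) ^ (-(N : ℝ) / 2) * t ^ (-((N : ℝ) + 1) / 2)
  have hpointwise : ∀ y, ‖(heatKernel N t (x - y) - heatKernel N t x) * u₀ y‖ ≤
      K * (‖y‖ * |u₀ y|) := fun y => by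
    have hdiff := abs_heatKernel_sub_heatKernel_le ht (x - y) x
    rw [sub_sub_cancel_left, norm_neg] at hdiff
    rw [norm_mul, Real.norm_eq_abs, Real.norm_eq_abs, ← mul_assoc]
    exact mul_le_mul_of_nonneg_right hdiff (abs_nonneg _)
  calc |heatSol N u₀ x t - (∫ y, u₀ y) * heatKernel N t x|
      = ‖∫ y, (heatKernel N t (x - y) - heatKernel N t x) * u₀ y‖ := by
        rw [heatSol_sub_integral_mul_heatKernel hu ht, Real.norm_eq_abs]
    _ ≤ ∫ y, K * (‖y‖ * |u₀ y|) :=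
        norm_integral_le_of_norm_le (hmom.const_mul K) (Eventually.of_forall hpointwise)
    _ = _ := by rw [integral_const_mul]; ring

/-- Quantitative sup-norm convergence for data with finite first absolute moment:
`|u(x,t) − M·G_t(x)| ≤ C·𝒩₁·t^{-(N+1)/2}` with `C = C(N)`. -/
theorem heat_convergence_rate_first_moment_sup (N : ℕ) (hN : 1 ≤ N) :
    ∃ C : ℝ, 0 < C ∧ ∀ u₀ : EuclideanSpace ℝ (Fin N) → ℝ,
      Integrable u₀ →
      Integrable (fun y => ‖y‖ * |u₀ y|) →
      ∀ t : ℝ, 0 < t → ∀ x : EuclideanSpace ℝ (Fin N),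
        |heatSol N u₀ x t - (∫ y, u₀ y) * heatKernel N t x| ≤
          C * (∫ y, ‖y‖ * |u₀ y|) * t ^ (-((N : ℝ) + 1) / 2) :=
  heat_convergence_rate_first_moment_sup_general N
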